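/- arXiv:math/0505088 — 4 statements merged into one kernel-verified Lean document; each statement's English description precedes it below -/
import Mathlib

section
/- In the setting of an A₃A₁ bitangent circle in the plane (A₃ contact at p(0), A₁ contact at q(0)), let t(s) and r(s) be the smooth functions given by the implicit function theorem solving p(s) + r·m(s) = q(t) + r·n(t). Then t'(0) = t''(0) = 0 and r'(0) = r''(0) = 0. That is, both t and r have degenerate critical points at s = 0, so the off-diagonal stratum of the pre-symmetry set, viewed as the graph of t(s), has an inflexion with horizontal tangent at s = 0. -/
open Topology Filter ContDiff

private lemma hd_fst {c : ℝ → ℝ × ℝ} {v : ℝ × ℝ} {s : ℝ} (h : HasDerivAt c v s) :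
    HasDerivAt (fun x => (c x).1) v.1 s := by
  simpa using (h.hasFDerivAt.fst (𝕜 := ℝ)).hasDerivAt

private lemma hd_snd {c : ℝ → ℝ × ℝ} {v : ℝ × ℝ} {s : ℝ} (h : HasDerivAt c v s) :
    HasDerivAt (fun x => (c x).2) v.2 s := by
  simpa using (h.hasFDerivAt.snd (𝕜 := ℝ)).hasDerivAt

set_option maxHeartbeats 2000000 in
/-- In the A₃A₁ bitangent circle setting (A₃ contact at `p(0)`: `r₀κ(0) = 1` and
`κ'(0) = 0`; A₁ contact at `q(0)`: `r₀λ(0) ≠ 1`), let `t(s)` and `r(s)` be the smooth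
functions solving `p(s) + r·m(s) = q(t) + r·n(t)` with `t(0) = 0`, `r(0) = r₀`. Then
`t'(0) = t''(0) = 0` and `r'(0) = r''(0) = 0`: both have degenerate critical points at
`s = 0`, so the off-diagonal stratum of the pre-symmetry set, the graph of `t`, has an
inflexion with horizontal tangent at `s = 0`. -/
theorem stmt10 (p q e f m n : ℝ → ℝ × ℝ) (κ lam : ℝ → ℝ) (r₀ ε : ℝ) (T R : ℝ → ℝ)
    (hp : ContDiff ℝ (⊤ : ℕ∞) p) (hq : ContDiff ℝ (⊤ : ℕ∞) q)
    (hκ : ContDiff ℝ (⊤ : ℕ∞) κ) (hlam : ContDiff ℝ (⊤ : ℕ∞) lam)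
    (hpe : ∀ s, deriv p s = e s) (hee : ∀ s, deriv e s = κ s • m s)
    (hmm : ∀ s, deriv m s = (-(κ s)) • e s)
    (hqf : ∀ t, deriv q t = f t) (hff : ∀ t, deriv f t = lam t • n t)
    (hnn : ∀ t, deriv n t = (-(lam t)) • f t)
    (hue : ∀ s, (e s).1^2 + (e s).2^2 = 1) (huf : ∀ t, (f t).1^2 + (f t).2^2 = 1)
    (hum : ∀ s, (m s).1^2 + (m s).2^2 = 1) (hun : ∀ t, (n t).1^2 + (n t).2^2 = 1)
    (hem : ∀ s, (e s).1*(m s).1 + (e s).2*(m s).2 = 0)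
    (hfn : ∀ t, (f t).1*(n t).1 + (f t).2*(n t).2 = 0)
    (hA3 : r₀ * κ 0 = 1) (hκ' : deriv κ 0 = 0)
    (hA1 : r₀ * lam 0 ≠ 1) (hpq : p 0 ≠ q 0)
    (hε : 0 < ε) (hT : ContDiff ℝ (⊤ : ℕ∞) T) (hR : ContDiff ℝ (⊤ : ℕ∞) R)
    (hT0 : T 0 = 0) (hR0 : R 0 = r₀)
    (hsol : ∀ s : ℝ, |s| < ε → p s + R s • m s = q (T s) + R s • n (T s)) :
    deriv T 0 = 0 ∧ deriv (deriv T) 0 = 0 ∧ deriv R 0 = 0 ∧ deriv (deriv R) 0 = 0 := by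
  have h1inf : (1 : WithTop ℕ∞) ≤ ∞ := by exact_mod_cast le_top
  have hr0 : r₀ ≠ 0 := fun h => by rw [h, zero_mul] at hA3; exact zero_ne_one hA3
  have hk0 : κ 0 ≠ 0 := fun h => by rw [h, mul_zero] at hA3; exact zero_ne_one hA3
  -- basic derivative handles
  have hdp : ∀ s, HasDerivAt p (e s) s := fun s =>
    hpe s ▸ (hp.differentiable (by simp) s).hasDerivAt
  have hdq : ∀ t, HasDerivAt q (f t) t := fun t =>
    hqf t ▸ (hq.differentiable (by simp) t).hasDerivAt
  have heC : ContDiff ℝ ∞ e := by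
    have h := (contDiff_infty_iff_deriv.mp (hp.of_le (by simp))).2
    rwa [funext hpe] at h
  have hfC : ContDiff ℝ ∞ f := by
    have h := (contDiff_infty_iff_deriv.mp (hq.of_le (by simp))).2
    rwa [funext hqf] at h
  have hde : ∀ s, HasDerivAt e (κ s • m s) s := fun s =>
    hee s ▸ (heC.differentiable (by simp) s).hasDerivAt
  have hdf : ∀ t, HasDerivAt f (lam t • n t) t := fun t =>
    hff t ▸ (hfC.differentiable (by simp) t).hasDerivAt
  have hdT : ∀ s, HasDerivAt T (deriv T s) s := fun s => (hT.differentiable (by simp) s).hasDerivAt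
  have hdR : ∀ s, HasDerivAt R (deriv R s) s := fun s => (hR.differentiable (by simp) s).hasDerivAt
  have hdT2 : HasDerivAt (deriv T) (deriv (deriv T) 0) 0 :=
    ((contDiff_infty_iff_deriv.mp (hT.of_le (by simp))).2.differentiable (by simp) 0).hasDerivAt
  have hdR2 : HasDerivAt (deriv R) (deriv (deriv R) 0) 0 :=
    ((contDiff_infty_iff_deriv.mp (hR.of_le (by simp))).2.differentiable (by simp) 0).hasDerivAt
  have hdκ : HasDerivAt κ (deriv κ 0) 0 := (hκ.differentiable (by simp) 0).hasDerivAt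
  -- m is differentiable where κ ≠ 0
  have hUopen : IsOpen {x : ℝ | κ x ≠ 0} := by
    have : {x : ℝ | κ x ≠ 0} = κ ⁻¹' {(0:ℝ)}ᶜ := rfl
    rw [this]; exact isOpen_compl_singleton.preimage hκ.continuous
  have hdm : ∀ x, κ x ≠ 0 → HasDerivAt m ((-(κ x)) • e x) x := by
    intro x hx
    have hg : DifferentiableAt ℝ (fun y => (κ y)⁻¹ • deriv e y) x :=
      ((hκ.differentiable (by simp) x).inv hx).smul
        ((contDiff_infty_iff_deriv.mp heC).2.differentiable (by simp) x)
    have hme : DifferentiableAt ℝ m x := by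
      refine hg.congr_of_eventuallyEq ?_
      filter_upwards [hUopen.mem_nhds hx] with y hy
      rw [hee y, smul_smul, inv_mul_cancel₀ hy, one_smul]
    exact hmm x ▸ hme.hasDerivAt
  have he1 : ∀ s, HasDerivAt (fun x => (e x).1) (κ s * (m s).1) s := fun s => by
    simpa using hd_fst (hde s)
  have he2 : ∀ s, HasDerivAt (fun x => (e x).2) (κ s * (m s).2) s := fun s => by
    simpa using hd_snd (hde s)
  have hm1 : ∀ x, κ x ≠ 0 → HasDerivAt (fun y => (m y).1) (-(κ x) * (e x).1) x := fun x hx => by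
    simpa using hd_fst (hdm x hx)
  have hm2 : ∀ x, κ x ≠ 0 → HasDerivAt (fun y => (m y).2) (-(κ x) * (e x).2) x := fun x hx => by
    simpa using hd_snd (hdm x hx)
  have hdqT : ∀ s, HasDerivAt (fun x => q (T x)) (deriv T s • f (T s)) s := fun s =>
    (hdq (T s)).scomp s (hdT s)
  have hdf1T : ∀ s, HasDerivAt (fun x => (f (T x)).1) (deriv T s * lam (T s) * (n (T s)).1) s :=
    fun s => by simpa [smul_smul] using hd_fst (((hdf (T s)).scomp s (hdT s)))
  have hdf2T : ∀ s, HasDerivAt (fun x => (f (T x)).2) (deriv T s * lam (T s) * (n (T s)).2) s :=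
    fun s => by simpa [smul_smul] using hd_snd (((hdf (T s)).scomp s (hdT s)))
  -- the functions u, v
  set u1 : ℝ → ℝ := fun s => (p s).1 + R s * (m s).1 - (q (T s)).1 with hu1d
  set u2 : ℝ → ℝ := fun s => (p s).2 + R s * (m s).2 - (q (T s)).2 with hu2d
  set v1 : ℝ → ℝ := fun s =>
    (e s).1 + (deriv R s * (m s).1 + R s * (-(κ s) * (e s).1)) - deriv T s * (f (T s)).1 with hv1d
  set v2 : ℝ → ℝ := fun s =>
    (e s).2 + (deriv R s * (m s).2 + R s * (-(κ s) * (e s).2)) - deriv T s * (f (T s)).2 with hv2d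
  have hdu1 : ∀ x, κ x ≠ 0 → HasDerivAt u1 (v1 x) x := by
    intro x hx
    have h := ((hd_fst (hdp x)).add ((hdR x).mul (hm1 x hx))).sub (hd_fst (hdqT x))
    simpa [hu1d, hv1d, mul_comm, Pi.add_def, Pi.sub_def, Pi.mul_def] using h
  have hdu2 : ∀ x, κ x ≠ 0 → HasDerivAt u2 (v2 x) x := by
    intro x hx
    have h := ((hd_snd (hdp x)).add ((hdR x).mul (hm2 x hx))).sub (hd_snd (hdqT x))
    simpa [hu2d, hv2d, mul_comm, Pi.add_def, Pi.sub_def, Pi.mul_def] using h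
  -- eventual facts near 0
  have hball : ∀ᶠ s in 𝓝 (0:ℝ), |s| < ε := by
    filter_upwards [Metric.ball_mem_nhds (0:ℝ) hε] with s hs
    simpa [Real.dist_eq] using hs
  have hκne : ∀ᶠ s in 𝓝 (0:ℝ), κ s ≠ 0 := hκ.continuous.continuousAt.eventually_ne hk0
  have hu_n1 : ∀ᶠ s in 𝓝 (0:ℝ), u1 s = R s * (n (T s)).1 := by
    filter_upwards [hball] with s hs
    have h := congrArg Prod.fst (hsol s hs)
    simp only [Prod.fst_add, Prod.smul_fst, smul_eq_mul] at h
    rw [hu1d]; dsimp only; linarith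
  have hu_n2 : ∀ᶠ s in 𝓝 (0:ℝ), u2 s = R s * (n (T s)).2 := by
    filter_upwards [hball] with s hs
    have h := congrArg Prod.snd (hsol s hs)
    simp only [Prod.snd_add, Prod.smul_snd, smul_eq_mul] at h
    rw [hu2d]; dsimp only; linarith
  set G1 : ℝ → ℝ := fun s => u1 s^2 + u2 s^2 - R s^2 with hG1d
  set G2 : ℝ → ℝ := fun s => (f (T s)).1 * u1 s + (f (T s)).2 * u2 s with hG2d
  have hG1 : ∀ᶠ s in 𝓝 (0:ℝ), G1 s = 0 := by
    filter_upwards [hu_n1, hu_n2] with s h1 h2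
    rw [hG1d]; dsimp only; rw [h1, h2]
    linear_combination (R s)^2 * hun (T s)
  have hG2 : ∀ᶠ s in 𝓝 (0:ℝ), G2 s = 0 := by
    filter_upwards [hu_n1, hu_n2] with s h1 h2
    rw [hG2d]; dsimp only; rw [h1, h2]
    linear_combination R s * hfn (T s)
  set D1 : ℝ → ℝ := fun s => 2*(u1 s * v1 s) + 2*(u2 s * v2 s) - 2*(R s * deriv R s) with hD1d
  set D2 : ℝ → ℝ := fun s => ((deriv T s * lam (T s) * (n (T s)).1) * u1 s + (f (T s)).1 * v1 s)
      + ((deriv T s * lam (T s) * (n (T s)).2) * u2 s + (f (T s)).2 * v2 s) with hD2d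
  have hD1 : ∀ᶠ s in 𝓝 (0:ℝ), D1 s = 0 := by
    filter_upwards [hκne, hG1.eventually_nhds] with s hks hGs
    have h1 : HasDerivAt G1 (D1 s) s := by
      have h := (((hdu1 s hks).pow 2).add ((hdu2 s hks).pow 2)).sub ((hdR s).pow 2)
      have hval : D1 s = (2:ℕ) * u1 s ^ (2-1) * v1 s + (2:ℕ) * u2 s ^ (2-1) * v2 s
          - (2:ℕ) * R s ^ (2-1) * deriv R s := by rw [hD1d]; push_cast; ring
      rw [hval]; exact h
    have h2 : deriv G1 s = 0 := by
      have hEq : G1 =ᶠ[𝓝 s] fun _ => 0 := hGs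
      rw [hEq.deriv_eq, deriv_const]
    rw [← h1.deriv, h2]
  have hD2 : ∀ᶠ s in 𝓝 (0:ℝ), D2 s = 0 := by
    filter_upwards [hκne, hG2.eventually_nhds] with s hks hGs
    have h1 : HasDerivAt G2 (D2 s) s :=
      ((hdf1T s).mul (hdu1 s hks)).add ((hdf2T s).mul (hdu2 s hks))
    have h2 : deriv G2 s = 0 := by
      have hEq : G2 =ᶠ[𝓝 s] fun _ => 0 := hGs
      rw [hEq.deriv_eq, deriv_const]
    rw [← h1.deriv, h2]
  -- values at 0
  have hu10 : u1 0 = r₀ * (n 0).1 := by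
    have h := hu_n1.self_of_nhds; rwa [hT0, hR0] at h
  have hu20 : u2 0 = r₀ * (n 0).2 := by
    have h := hu_n2.self_of_nhds; rwa [hT0, hR0] at h
  have hv10 : v1 0 = deriv R 0 * (m 0).1 - deriv T 0 * (f 0).1 := by
    rw [hv1d]; dsimp only; rw [hT0, hR0]
    linear_combination (-(e 0).1) * hA3
  have hv20 : v2 0 = deriv R 0 * (m 0).2 - deriv T 0 * (f 0).2 := by
    rw [hv2d]; dsimp only; rw [hT0, hR0]
    linear_combination (-(e 0).2) * hA3
  -- m 0 ≠ n 0 in inner-product form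
  have hmn : (m 0).1*(n 0).1 + (m 0).2*(n 0).2 ≠ 1 := by
    intro hc
    have h1 : ((m 0).1 - (n 0).1)^2 + ((m 0).2 - (n 0).2)^2 = 0 := by
      nlinarith [hum 0, hun 0]
    have hm1e : (m 0).1 = (n 0).1 := by nlinarith [sq_nonneg ((m 0).1 - (n 0).1), sq_nonneg ((m 0).2 - (n 0).2)]
    have hm2e : (m 0).2 = (n 0).2 := by nlinarith [sq_nonneg ((m 0).1 - (n 0).1), sq_nonneg ((m 0).2 - (n 0).2)]
    have hmn0 : m 0 = n 0 := Prod.ext hm1e hm2e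
    have h := hsol 0 (by simpa using hε)
    rw [hT0, hR0, hmn0] at h
    exact hpq (add_right_cancel h)
  -- first-order equations
  have e1 := hD1.self_of_nhds
  have e2 := hD2.self_of_nhds
  rw [hD1d] at e1
  dsimp only at e1
  rw [hu10, hu20, hv10, hv20, hR0] at e1
  rw [hD2d] at e2
  dsimp only at e2
  rw [hT0, hu10, hu20, hv10, hv20] at e2
  have key1 : deriv R 0 * (2*r₀*((m 0).1*(n 0).1 + (m 0).2*(n 0).2 - 1)) = 0 := by
    linear_combination e1 + 2*r₀*(deriv T 0) * hfn 0
  have hR'0 : deriv R 0 = 0 := by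
    rcases mul_eq_zero.mp key1 with h | h
    · exact h
    · exfalso
      rcases mul_eq_zero.mp h with h' | h'
      · exact hr0 (by linarith)
      · exact hmn (by linarith)
  have key2 : deriv T 0 * (r₀ * lam 0 - 1) = 0 := by
    linear_combination e2 - (deriv T 0) * (lam 0) * r₀ * hun 0 + (deriv T 0) * huf 0
      - ((f 0).1*(m 0).1 + (f 0).2*(m 0).2) * hR'0
  have hT'0 : deriv T 0 = 0 := by
    rcases mul_eq_zero.mp key2 with h | h
    · exact h
    · exact absurd (by linarith : r₀ * lam 0 = 1) hA1
  -- clean derivative handles at 0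
  have hdR0 : HasDerivAt R 0 0 := by simpa only [hR'0] using hdR 0
  have hdT0 : HasDerivAt T 0 0 := by simpa only [hT'0] using hdT 0
  have hv1z : v1 0 = 0 := by rw [hv10, hR'0, hT'0]; ring
  have hv2z : v2 0 = 0 := by rw [hv20, hR'0, hT'0]; ring
  have hdu10 : HasDerivAt u1 0 0 := by simpa only [hv1z] using hdu1 0 hk0
  have hdu20 : HasDerivAt u2 0 0 := by simpa only [hv2z] using hdu2 0 hk0
  have hv1'' : HasDerivAt v1 (deriv (deriv R) 0 * (m 0).1 - deriv (deriv T) 0 * (f 0).1) 0 := by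
    have hraw1 := ((he1 0).add ((hdR2.mul (hm1 0 hk0)).add
        ((hdR 0).mul ((hdκ.neg).mul (he1 0))))).sub (hdT2.mul (hdf1T 0))
    have hWr : HasDerivAt v1 (κ 0 * (m 0).1 +
        (deriv (deriv R) 0 * (m 0).1 + deriv R 0 * (-κ 0 * (e 0).1) +
          (deriv R 0 * (-κ 0 * (e 0).1) + R 0 * (-deriv κ 0 * (e 0).1 + -κ 0 * (κ 0 * (m 0).1)))) -
      (deriv (deriv T) 0 * (f (T 0)).1 + deriv T 0 * (deriv T 0 * lam (T 0) * (n (T 0)).1))) 0 := by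
      rw [hv1d]; exact hraw1
    have hW : (κ 0 * (m 0).1 +
        (deriv (deriv R) 0 * (m 0).1 + deriv R 0 * (-κ 0 * (e 0).1) +
          (deriv R 0 * (-κ 0 * (e 0).1) + R 0 * (-deriv κ 0 * (e 0).1 + -κ 0 * (κ 0 * (m 0).1)))) -
      (deriv (deriv T) 0 * (f (T 0)).1 + deriv T 0 * (deriv T 0 * lam (T 0) * (n (T 0)).1)))
        = deriv (deriv R) 0 * (m 0).1 - deriv (deriv T) 0 * (f 0).1 := by
      rw [hT0, hR0, hR'0, hT'0, hκ']
      linear_combination (-(κ 0 * (m 0).1)) * hA3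
    exact hW ▸ hWr
  have hv2'' : HasDerivAt v2 (deriv (deriv R) 0 * (m 0).2 - deriv (deriv T) 0 * (f 0).2) 0 := by
    have hraw1 := ((he2 0).add ((hdR2.mul (hm2 0 hk0)).add
        ((hdR 0).mul ((hdκ.neg).mul (he2 0))))).sub (hdT2.mul (hdf2T 0))
    have hWr : HasDerivAt v2 (κ 0 * (m 0).2 +
        (deriv (deriv R) 0 * (m 0).2 + deriv R 0 * (-κ 0 * (e 0).2) +
          (deriv R 0 * (-κ 0 * (e 0).2) + R 0 * (-deriv κ 0 * (e 0).2 + -κ 0 * (κ 0 * (m 0).2)))) -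
      (deriv (deriv T) 0 * (f (T 0)).2 + deriv T 0 * (deriv T 0 * lam (T 0) * (n (T 0)).2))) 0 := by
      rw [hv2d]; exact hraw1
    have hW : (κ 0 * (m 0).2 +
        (deriv (deriv R) 0 * (m 0).2 + deriv R 0 * (-κ 0 * (e 0).2) +
          (deriv R 0 * (-κ 0 * (e 0).2) + R 0 * (-deriv κ 0 * (e 0).2 + -κ 0 * (κ 0 * (m 0).2)))) -
      (deriv (deriv T) 0 * (f (T 0)).2 + deriv T 0 * (deriv T 0 * lam (T 0) * (n (T 0)).2)))
        = deriv (deriv R) 0 * (m 0).2 - deriv (deriv T) 0 * (f 0).2 := by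
      rw [hT0, hR0, hR'0, hT'0, hκ']
      linear_combination (-(κ 0 * (m 0).2)) * hA3
    exact hW ▸ hWr
  -- second-order equation from D1
  have hD1deriv : HasDerivAt D1 (2 * (0 * v1 0 + u1 0 * (deriv (deriv R) 0 * (m 0).1 - deriv (deriv T) 0 * (f 0).1))
      + 2 * (0 * v2 0 + u2 0 * (deriv (deriv R) 0 * (m 0).2 - deriv (deriv T) 0 * (f 0).2))
      - 2 * (0 * deriv R 0 + R 0 * deriv (deriv R) 0)) 0 := by
    rw [hD1d]
    exact (((hdu10.mul hv1'').const_mul (2:ℝ)).add ((hdu20.mul hv2'').const_mul (2:ℝ))).sub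
      ((hdR0.mul hdR2).const_mul (2:ℝ))
  have e3 : (2 * (0 * v1 0 + u1 0 * (deriv (deriv R) 0 * (m 0).1 - deriv (deriv T) 0 * (f 0).1))
      + 2 * (0 * v2 0 + u2 0 * (deriv (deriv R) 0 * (m 0).2 - deriv (deriv T) 0 * (f 0).2))
      - 2 * (0 * deriv R 0 + R 0 * deriv (deriv R) 0)) = 0 := by
    rw [← hD1deriv.deriv]
    have hEq : D1 =ᶠ[𝓝 (0:ℝ)] fun _ => 0 := hD1
    rw [hEq.deriv_eq, deriv_const]
  rw [hu10, hu20, hR0] at e3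
  have key3 : deriv (deriv R) 0 * (2*r₀*((m 0).1*(n 0).1 + (m 0).2*(n 0).2 - 1)) = 0 := by
    linear_combination e3 + 2*r₀*(deriv (deriv T) 0) * hfn 0
  have hR''0 : deriv (deriv R) 0 = 0 := by
    rcases mul_eq_zero.mp key3 with h | h
    · exact h
    · exfalso
      rcases mul_eq_zero.mp h with h' | h'
      · exact hr0 (by linarith)
      · exact hmn (by linarith)
  -- second-order equation from D2
  have hR0ne : R 0 ≠ 0 := by rw [hR0]; exact hr0
  have hRne : ∀ᶠ s in 𝓝 (0:ℝ), R s ≠ 0 := hR.continuous.continuousAt.eventually_ne hR0ne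
  have hN1 : HasDerivAt (fun s => (n (T s)).1) 0 0 := by
    have hg : HasDerivAt (fun s => (R s)⁻¹ * u1 s)
        (-deriv R 0 / R 0 ^ 2 * u1 0 + (R 0)⁻¹ * v1 0) 0 := ((hdR 0).inv hR0ne).mul (hdu1 0 hk0)
    have hEq : (fun s => (n (T s)).1) =ᶠ[𝓝 (0:ℝ)] fun s => (R s)⁻¹ * u1 s := by
      filter_upwards [hu_n1, hRne] with s h1 h2
      rw [h1]; field_simp
    have h0 : (-deriv R 0 / R 0 ^ 2 * u1 0 + (R 0)⁻¹ * v1 0) = 0 := by rw [hR'0, hv1z]; ring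
    have h' := hg.congr_of_eventuallyEq hEq
    rwa [h0] at h'
  have hN2 : HasDerivAt (fun s => (n (T s)).2) 0 0 := by
    have hg : HasDerivAt (fun s => (R s)⁻¹ * u2 s)
        (-deriv R 0 / R 0 ^ 2 * u2 0 + (R 0)⁻¹ * v2 0) 0 := ((hdR 0).inv hR0ne).mul (hdu2 0 hk0)
    have hEq : (fun s => (n (T s)).2) =ᶠ[𝓝 (0:ℝ)] fun s => (R s)⁻¹ * u2 s := by
      filter_upwards [hu_n2, hRne] with s h1 h2
      rw [h1]; field_simp
    have h0 : (-deriv R 0 / R 0 ^ 2 * u2 0 + (R 0)⁻¹ * v2 0) = 0 := by rw [hR'0, hv2z]; ring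
    have h' := hg.congr_of_eventuallyEq hEq
    rwa [h0] at h'
  have hlamT : HasDerivAt (fun s => lam (T s)) 0 0 := by
    have h := ((hlam.differentiable (by simp) (T 0)).hasDerivAt).comp 0 hdT0
    simpa [Function.comp_def] using h
  have hD2deriv : HasDerivAt D2
      ((((deriv (deriv T) 0 * lam (T 0) + deriv T 0 * 0) * (n (T 0)).1 + deriv T 0 * lam (T 0) * 0) * u1 0
          + deriv T 0 * lam (T 0) * (n (T 0)).1 * 0
        + (deriv T 0 * lam (T 0) * (n (T 0)).1 * v1 0
          + (f (T 0)).1 * (deriv (deriv R) 0 * (m 0).1 - deriv (deriv T) 0 * (f 0).1)))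
      + (((deriv (deriv T) 0 * lam (T 0) + deriv T 0 * 0) * (n (T 0)).2 + deriv T 0 * lam (T 0) * 0) * u2 0
          + deriv T 0 * lam (T 0) * (n (T 0)).2 * 0
        + (deriv T 0 * lam (T 0) * (n (T 0)).2 * v2 0
          + (f (T 0)).2 * (deriv (deriv R) 0 * (m 0).2 - deriv (deriv T) 0 * (f 0).2)))) 0 := by
    rw [hD2d]
    exact ((((hdT2.mul hlamT).mul hN1).mul hdu10).add ((hdf1T 0).mul hv1'')).add
      ((((hdT2.mul hlamT).mul hN2).mul hdu20).add ((hdf2T 0).mul hv2''))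
  have e4 := hD2deriv.deriv
  rw [show deriv D2 0 = 0 from by
      have hEq : D2 =ᶠ[𝓝 (0:ℝ)] fun _ => 0 := hD2
      rw [hEq.deriv_eq, deriv_const]] at e4
  rw [hT0, hu10, hu20, hv1z, hv2z, hT'0] at e4
  have key4 : deriv (deriv T) 0 * (r₀ * lam 0 - 1) = 0 := by
    linear_combination -e4 - (deriv (deriv T) 0) * (lam 0) * r₀ * hun 0 + (deriv (deriv T) 0) * huf 0
      - ((f 0).1*(m 0).1 + (f 0).2*(m 0).2) * hR''0
  have hT''0 : deriv (deriv T) 0 = 0 := by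
    rcases mul_eq_zero.mp key4 with h | h
    · exact h
    · exact absurd (by linarith : r₀ * lam 0 = 1) hA1
  exact ⟨hT'0, hT''0, hR'0, hR''0⟩
end

section
/- In the A₁A₁ case (r₀ ≠ 1/κᵢ and r₀ ≠ 1/λᵢ for all principal curvatures at both contact points), the map g : (s,t) ↦ (u,v) of the pre-symmetry set graph is a local diffeomorphism at (0,0). Specifically, the identities e₁(1−rκ₁) + r_s(m−n) = f₁(1−rλ₁)u_s + f₂(1−rλ₂)v_s and e₂(1−rκ₂) + r_t(m−n) = f₁(1−rλ₁)u_t + f₂(1−rλ₂)v_t force u_s v_t − u_t v_s ≠ 0, since e₁, e₂ (tangent to the sphere S₀) and m−n (parallel to a chord of S₀) are linearly independent. -/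
/-- In the A₁A₁ case (`r₀κᵢ ≠ 1` and `r₀λᵢ ≠ 1` at both contact points), the map
`g : (s,t) ↦ (u,v)` of the pre-symmetry set graph is a local diffeomorphism: the
identities `e₁(1−r₀κ₁) + r_s(m−n) = (1−r₀λ₁)u_s f₁ + (1−r₀λ₂)v_s f₂` and
`e₂(1−r₀κ₂) + r_t(m−n) = (1−r₀λ₁)u_t f₁ + (1−r₀λ₂)v_t f₂` force the Jacobian
determinant `u_s v_t − u_t v_s ≠ 0`, since `e₁, e₂` (tangent to the sphere `S₀`) and
`d = m−n` (parallel to a chord of `S₀`) are linearly independent. -/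
theorem stmt12 (e₁ e₂ f₁ f₂ d : EuclideanSpace ℝ (Fin 3))
    (κ₁ κ₂ lam1 lam2 r₀ rs rt us ut vs vt : ℝ)
    (hκ₁ : r₀ * κ₁ ≠ 1) (hκ₂ : r₀ * κ₂ ≠ 1)
    (hlam1 : r₀ * lam1 ≠ 1) (hlam2 : r₀ * lam2 ≠ 1)
    (hind : LinearIndependent ℝ ![e₁, e₂, d])
    (hfind : LinearIndependent ℝ ![f₁, f₂])
    (h1 : (1 - r₀*κ₁) • e₁ + rs • d = ((1 - r₀*lam1) * us) • f₁ + ((1 - r₀*lam2) * vs) • f₂)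
    (h2 : (1 - r₀*κ₂) • e₂ + rt • d = ((1 - r₀*lam1) * ut) • f₁ + ((1 - r₀*lam2) * vt) • f₂) :
    us * vt - ut * vs ≠ 0 := by
  intro hdet
  rw [Fintype.linearIndependent_iff] at hind
  by_cases hs : us = 0 ∧ vs = 0
  · obtain ⟨hu, hv⟩ := hs
    have hz : (1 - r₀*κ₁) • e₁ + rs • d = 0 := by
      rw [h1, hu, hv]; simp
    have h0 := hind ![1 - r₀*κ₁, 0, rs] ?_ 0
    · simp at h0
      exact hκ₁ (by linarith)
    · simpa [Fin.sum_univ_three] using hz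
  · push_neg at hs
    obtain ⟨c, hut, hvt⟩ : ∃ c : ℝ, ut = c * us ∧ vt = c * vs := by
      by_cases hu : us = 0
      · have hv : vs ≠ 0 := hs hu
        refine ⟨vt / vs, ?_, by field_simp⟩
        have : ut * vs = 0 := by rw [hu] at hdet; linarith
        have hut0 : ut = 0 := by
          rcases mul_eq_zero.mp this with h | h
          · exact h
          · exact absurd h hv
        rw [hut0, hu]; ring
      · refine ⟨ut / us, by field_simp, ?_⟩
        field_simp
        nlinarith [hdet]
    subst hut hvt
    have key : (c * (1 - r₀*κ₁)) • e₁ + (-(1 - r₀*κ₂)) • e₂ + (c * rs - rt) • d = 0 := by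
      have k2 : c • ((1 - r₀*κ₁) • e₁ + rs • d) - ((1 - r₀*κ₂) • e₂ + rt • d)
          = c • (((1 - r₀*lam1) * us) • f₁ + ((1 - r₀*lam2) * vs) • f₂)
            - (((1 - r₀*lam1) * (c * us)) • f₁ + ((1 - r₀*lam2) * (c * vs)) • f₂) := by
        rw [h1, h2]
      have k3 : c • (((1 - r₀*lam1) * us) • f₁ + ((1 - r₀*lam2) * vs) • f₂)
          - (((1 - r₀*lam1) * (c * us)) • f₁ + ((1 - r₀*lam2) * (c * vs)) • f₂) = 0 := by
        module
      rw [k3] at k2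
      linear_combination (norm := module) k2
    have h0 := hind ![c * (1 - r₀*κ₁), -(1 - r₀*κ₂), c * rs - rt] ?_ 1
    · simp at h0
      exact hκ₂ (by linarith)
    · simpa [Fin.sum_univ_three] using key
end

section
/- Suppose near a diagonal point the pre-symmetry set of a surface at an A₄ point is parametrized as the graph t(s,u) = t₂₀s² + t₁₁su + t₀₂u² + h.o.t. with t₁₁ = (4/3)t₀₂ and t₀₂ ≠ 0. Then the map h : (s,u) ↦ (s, t(s,u)) is a fold: its critical set Σ = {t_u = 0} = {t₁₁ s + 2t₀₂ u + h.o.t. = 0} is a smooth curve through the origin with tangent line 2s + 3u = 0, and h restricted to Σ is an immersion at the origin. -/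
open Asymptotics

section Aux
open Filter Topology ContinuousLinearMap

lemma aux_sq_isLittleO_id : (fun r : ℝ => r^2) =o[𝓝 (0:ℝ)] fun r => r := by
  have h1 : (fun r : ℝ => r) =o[𝓝 (0:ℝ)] (fun _ => (1:ℝ)) := by
    rw [isLittleO_one_iff]
    exact (continuous_id.tendsto (0:ℝ))
  have := (isBigO_refl (fun r : ℝ => r) (𝓝 0)).mul_isLittleO h1
  simpa [pow_two] using this

lemma aux_taylor1d (ψ : ℝ → ℝ) (a : ℝ) (hψ : ContDiff ℝ (⊤ : ℕ∞) ψ)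
    (h : (fun r => ψ r - a * r^2) =o[𝓝 (0:ℝ)] fun r => r^2) :
    ψ 0 = 0 ∧ deriv ψ 0 = 0 ∧ deriv (deriv ψ) 0 = 2*a := by
  have hcont : Continuous ψ := hψ.continuous
  have hdiff : Differentiable ℝ ψ := hψ.differentiable (by simp)
  have htend0 : Tendsto (fun r => ψ r - a * r^2) (𝓝 0) (𝓝 0) :=
    h.isBigO.trans_tendsto (by simpa using ((continuous_pow 2).tendsto (0:ℝ)))
  have htend1 : Tendsto (fun r => ψ r - a * r^2) (𝓝 0) (𝓝 (ψ 0)) := by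
    simpa using ((hcont.tendsto 0).sub
      (((continuous_const.mul (continuous_pow 2)).tendsto (0:ℝ))))
  have hψ0 : ψ 0 = 0 := by
    have := tendsto_nhds_unique htend1 htend0
    linarith
  have hder : HasDerivAt ψ 0 0 := by
    rw [hasDerivAt_iff_isLittleO]
    have h1 : (fun r : ℝ => ψ r - a * r^2) =o[𝓝 (0:ℝ)] fun r => r :=
      h.trans aux_sq_isLittleO_id
    have h2 : (fun r : ℝ => a * r^2) =o[𝓝 (0:ℝ)] fun r => r :=
      aux_sq_isLittleO_id.const_mul_left a
    have := h1.add h2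
    simp only [sub_add_cancel] at this
    simpa [hψ0] using this
  have hd0 : deriv ψ 0 = 0 := hder.deriv
  refine ⟨hψ0, hd0, ?_⟩
  have hχ : ContDiff ℝ (⊤ : ℕ∞) (deriv ψ) := by
    have h1 : ContDiff ℝ (⊤ : ℕ∞) (fderiv ℝ ψ) := hψ.fderiv_right (by simp)
    have h2 : ContDiff ℝ (⊤ : ℕ∞) fun x => fderiv ℝ ψ x 1 := h1.clm_apply contDiff_const
    convert h2 using 1
    funext x; rfl
  set b := deriv (deriv ψ) 0 with hb
  have hbd : HasDerivAt (deriv ψ) b 0 := ((hχ.differentiable (by simp)) 0).hasDerivAt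
  have hslope : Tendsto (slope (deriv ψ) 0) (𝓝[≠] (0:ℝ)) (𝓝 b) :=
    hasDerivAt_iff_tendsto_slope.1 hbd
  have hdiv : Tendsto (fun r => deriv ψ r / (2*r)) (𝓝[≠] (0:ℝ)) (𝓝 (b/2)) := by
    have : (fun r => deriv ψ r / (2*r)) = fun r => slope (deriv ψ) 0 r / 2 := by
      funext r
      simp [slope_def_field, hd0]
      ring
    rw [this]
    exact hslope.div_const 2
  have hlh : Tendsto (fun r => ψ r / r^2) (𝓝[≠] (0:ℝ)) (𝓝 (b/2)) := by
    apply HasDerivAt.lhopital_zero_nhdsNE (f' := deriv ψ) (g' := fun r => 2*r)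
    · exact Eventually.of_forall fun r => (hdiff r).hasDerivAt
    · exact Eventually.of_forall fun r => by simpa [mul_comm] using hasDerivAt_pow 2 r
    · filter_upwards [self_mem_nhdsWithin] with r hr
      simp only [Set.mem_compl_iff, Set.mem_singleton_iff] at hr
      exact mul_ne_zero two_ne_zero hr
    · exact tendsto_nhdsWithin_of_tendsto_nhds (by simpa [hψ0] using hcont.tendsto 0)
    · exact tendsto_nhdsWithin_of_tendsto_nhds
        (by simpa using ((continuous_pow 2).tendsto (0:ℝ)))
    · exact hdiv
  have hlittle : Tendsto (fun r => ψ r / r^2) (𝓝[≠] (0:ℝ)) (𝓝 a) := by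
    have h0 : Tendsto (fun r => (ψ r - a * r^2) / r^2) (𝓝[≠] (0:ℝ)) (𝓝 0) :=
      tendsto_nhdsWithin_of_tendsto_nhds h.tendsto_div_nhds_zero
    have heq : ∀ r ∈ ({(0:ℝ)}ᶜ : Set ℝ), (ψ r - a * r^2) / r^2 + a = ψ r / r^2 := by
      intro r hr
      simp only [Set.mem_compl_iff, Set.mem_singleton_iff] at hr
      field_simp
      ring
    have h1 : Tendsto (fun r => (ψ r - a * r^2) / r^2 + a) (𝓝[≠] (0:ℝ)) (𝓝 (0 + a)) :=
      h0.add tendsto_const_nhds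
    rw [zero_add] at h1
    exact h1.congr' (eventually_nhdsWithin_of_forall heq)
  have : b/2 = a := tendsto_nhds_unique hlh hlittle
  linarith

lemma aux_log_ratio_bound (u : ℝ) (hu : |u| ≤ 1/2) :
    |Real.log ((1+u)/(1-u))| ≤ 3 * |u| := by
  rw [abs_le] at hu
  have key : ∀ w : ℝ, 0 ≤ w → w ≤ 1/2 →
      Real.log ((1+w)/(1-w)) ≤ 3 * w ∧ 0 ≤ Real.log ((1+w)/(1-w)) := by
    intro w hw0 hw2
    have hw1 : (0:ℝ) < 1 - w := by linarith
    have hw3 : (0:ℝ) < 1 + w := by linarith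
    have hl : Real.log ((1+w)/(1-w)) = Real.log (1+w) - Real.log (1-w) :=
      Real.log_div (by positivity) (by positivity)
    constructor
    · have b1 : Real.log (1+w) ≤ w := by
        have := Real.log_le_sub_one_of_pos hw3; linarith
      have b2 : -Real.log (1-w) ≤ 2*w := by
        have h3 : 1 - (1-w)⁻¹ ≤ Real.log (1-w) := by
          have := Real.log_le_sub_one_of_pos (x := (1-w)⁻¹) (by positivity)
          rw [Real.log_inv] at this; linarith
        have h4 : (1-w)⁻¹ - 1 ≤ 2*w := by
          have h5 : (1:ℝ) ≤ (1+2*w)*(1-w) := by nlinarith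
          have h6 : (1-w)⁻¹ ≤ 1+2*w := by
            rw [inv_eq_one_div, div_le_iff₀ hw1]; linarith
          linarith
        linarith
      rw [hl]; linarith
    · rw [hl]
      have : Real.log (1-w) ≤ Real.log (1+w) :=
        Real.log_le_log (by positivity) (by linarith)
      linarith
  rcases le_or_gt 0 u with hu0 | hu0
  · have h := key u hu0 hu.2
    rw [abs_of_nonneg h.2, abs_of_nonneg hu0]
    exact h.1
  · have hneg := key (-u) (by linarith) (by linarith)
    have hinv : Real.log ((1+u)/(1-u)) = - Real.log ((1+(-u))/(1-(-u))) := by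
      rw [← Real.log_inv]
      congr 1
      rw [sub_neg_eq_add, ← sub_eq_add_neg, inv_div]
    rw [hinv, abs_neg, abs_of_nonneg hneg.2, abs_of_neg hu0]
    linarith [hneg.1]

/-- Invertible linear map `(x,y) ↦ (x, M (x,y))` when `M (0,1) ≠ 0`. -/
noncomputable def auxEquiv (M : ℝ × ℝ →L[ℝ] ℝ) (hd : M ((0:ℝ),(1:ℝ)) ≠ 0) :
    (ℝ × ℝ) ≃L[ℝ] (ℝ × ℝ) := by
  refine ContinuousLinearEquiv.equivOfInverse
    ((fst ℝ ℝ ℝ).prod M)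
    ((fst ℝ ℝ ℝ).prod ((M ((0:ℝ),(1:ℝ)))⁻¹ • (snd ℝ ℝ ℝ - M.comp ((fst ℝ ℝ ℝ).prod 0))))
    ?_ ?_
  · intro p
    have hp : M p = M (p.1, 0) + p.2 * M ((0:ℝ),(1:ℝ)) := by
      have h1 : M p = M ((p.1, (0:ℝ)) + p.2 • ((0:ℝ),(1:ℝ))) := by
        congr 1; ext <;> simp
      rw [h1, map_add, map_smul, smul_eq_mul]
    ext
    · simp
    · simp only [ContinuousLinearMap.prod_apply, coe_fst', coe_snd', smul_apply,
        ContinuousLinearMap.sub_apply, ContinuousLinearMap.comp_apply,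
        ContinuousLinearMap.zero_apply, smul_eq_mul]
      rw [hp]
      field_simp
      ring
  · intro q
    have hM : ∀ z : ℝ, M (q.1, z) = M (q.1, 0) + z * M ((0:ℝ),(1:ℝ)) := by
      intro z
      have h1 : M ((q.1:ℝ), z) = M ((q.1, (0:ℝ)) + z • ((0:ℝ),(1:ℝ))) := by
        congr 1; ext <;> simp
      rw [h1, map_add, map_smul, smul_eq_mul]
    ext
    · simp
    · simp only [ContinuousLinearMap.prod_apply, coe_fst', coe_snd', smul_apply,
        ContinuousLinearMap.sub_apply, ContinuousLinearMap.comp_apply,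
        ContinuousLinearMap.zero_apply, smul_eq_mul]
      rw [hM]
      field_simp
      ring

lemma auxEquiv_coe (M : ℝ × ℝ →L[ℝ] ℝ) (hd : M ((0:ℝ),(1:ℝ)) ≠ 0) :
    (auxEquiv M hd : (ℝ×ℝ) →L[ℝ] (ℝ×ℝ)) = (fst ℝ ℝ ℝ).prod M := rfl

lemma auxEquiv_apply (M : ℝ × ℝ →L[ℝ] ℝ) (hd : M ((0:ℝ),(1:ℝ)) ≠ 0) (p : ℝ × ℝ) :
    auxEquiv M hd p = (p.1, M p) := rfl

end Aux

/-- The partial derivative `∂t/∂u` of a function `t(s,u)`, whose vanishing defines the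
critical set of the map `h : (s,u) ↦ (s, t(s,u))`. -/
noncomputable def preSymD (t : ℝ × ℝ → ℝ) (p : ℝ × ℝ) : ℝ :=
  deriv (fun u => t (p.1, u)) p.2

section Aux2
open Filter Topology ContinuousLinearMap

variable {t : ℝ × ℝ → ℝ} {t20 t11 t02 : ℝ}

lemma aux_preSymD_eq (ht : ContDiff ℝ (⊤ : ℕ∞) t) (p : ℝ × ℝ) :
    preSymD t p = fderiv ℝ t p ((0:ℝ), (1:ℝ)) := by
  have hmk : HasDerivAt (fun u : ℝ => (p.1, u)) ((0:ℝ), (1:ℝ)) p.2 :=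
    (hasDerivAt_const p.2 p.1).prodMk (hasDerivAt_id p.2)
  have hc : HasDerivAt (fun u => t (p.1, u)) (fderiv ℝ t (p.1, p.2) ((0:ℝ),(1:ℝ))) p.2 :=
    (ht.differentiable (by simp) (p.1, p.2)).hasFDerivAt.comp_hasDerivAt p.2 hmk
  rw [preSymD, hc.deriv]

lemma aux_preSymD_smooth (ht : ContDiff ℝ (⊤ : ℕ∞) t) : ContDiff ℝ (⊤ : ℕ∞) (preSymD t) := by
  have h : preSymD t = fun p => fderiv ℝ t p ((0:ℝ),(1:ℝ)) := funext (aux_preSymD_eq ht)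
  rw [h]
  exact (ht.fderiv_right (by simp)).clm_apply contDiff_const

lemma aux_jet_extract (ht : ContDiff ℝ (⊤ : ℕ∞) t)
    (hjet : (fun p : ℝ × ℝ => t p - (t20*p.1^2 + t11*p.1*p.2 + t02*p.2^2))
        =o[nhds (0 : ℝ × ℝ)] fun p : ℝ × ℝ => ‖p‖^2) :
    (∀ v : ℝ × ℝ, fderiv ℝ t 0 v = 0) ∧
    (∀ v : ℝ × ℝ, fderiv ℝ (fderiv ℝ t) 0 v v
      = 2 * (t20*v.1^2 + t11*v.1*v.2 + t02*v.2^2)) := by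
  have hdiff : Differentiable ℝ t := ht.differentiable (by simp)
  have hfd : ContDiff ℝ (⊤ : ℕ∞) (fderiv ℝ t) := ht.fderiv_right (by simp)
  have key : ∀ v : ℝ × ℝ,
      fderiv ℝ t 0 v = 0 ∧ fderiv ℝ (fderiv ℝ t) 0 v v
        = 2 * (t20*v.1^2 + t11*v.1*v.2 + t02*v.2^2) := by
    intro v
    set Q : ℝ := t20*v.1^2 + t11*v.1*v.2 + t02*v.2^2 with hQ
    set ψ : ℝ → ℝ := fun r => t (r • v) with hψdef
    have hline : ContDiff ℝ (⊤ : ℕ∞) (fun r : ℝ => r • v) := contDiff_id.smul contDiff_const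
    have hψ : ContDiff ℝ (⊤ : ℕ∞) ψ := ht.comp hline
    have hlineD : ∀ r : ℝ, HasDerivAt (fun r : ℝ => r • v) v r := by
      intro r
      simpa using (hasDerivAt_id r).smul_const v
    have hcomp : Tendsto (fun r : ℝ => r • v) (𝓝 0) (𝓝 (0 : ℝ × ℝ)) := by
      simpa using (hline.continuous.tendsto 0)
    have h1 := hjet.comp_tendsto hcomp
    have h2 : (fun r : ℝ => ψ r - Q * r^2) =o[𝓝 (0:ℝ)] fun r => ‖r • v‖^2 := by
      refine IsLittleO.congr' (h1.congr' ?_ (by rfl)) (by rfl) (by rfl)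
      apply Eventually.of_forall
      intro r
      simp only [Function.comp_apply, hψdef, Prod.smul_fst, Prod.smul_snd, smul_eq_mul, hQ]
      ring_nf
    have h3 : (fun r : ℝ => ‖r • v‖^2) =O[𝓝 (0:ℝ)] fun r => r^2 := by
      have h4 : (fun r : ℝ => ‖r • v‖^2) = fun r : ℝ => ‖v‖^2 * r^2 := by
        funext r
        rw [norm_smul]
        simp [mul_pow]
        ring
      rw [h4]
      exact (isBigO_refl (fun r : ℝ => r^2) (𝓝 0)).const_mul_left _
    have hlo : (fun r : ℝ => ψ r - Q * r^2) =o[𝓝 (0:ℝ)] fun r => r^2 := h2.trans_isBigO h3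
    obtain ⟨hψ0, hψ1, hψ2⟩ := aux_taylor1d ψ Q hψ hlo
    have hder1 : ∀ r : ℝ, HasDerivAt ψ (fderiv ℝ t (r • v) v) r := fun r =>
      (hdiff (r • v)).hasFDerivAt.comp_hasDerivAt r (hlineD r)
    have hderiv_eq : deriv ψ = fun r => fderiv ℝ t (r • v) v := funext fun r => (hder1 r).deriv
    have hgrad : fderiv ℝ t 0 v = 0 := by
      have h5 := hψ1
      rw [hderiv_eq] at h5
      simpa using h5
    refine ⟨hgrad, ?_⟩
    have hB : HasFDerivAt (fderiv ℝ t) (fderiv ℝ (fderiv ℝ t) 0) 0 :=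
      ((hfd.differentiable (by simp)) 0).hasFDerivAt
    have hΦ : HasFDerivAt (fun x => fderiv ℝ t x v)
        ((ContinuousLinearMap.apply ℝ ℝ v).comp (fderiv ℝ (fderiv ℝ t) 0)) 0 :=
      (ContinuousLinearMap.apply ℝ ℝ v).hasFDerivAt.comp 0 hB
    have hder2 : HasDerivAt (fun r : ℝ => fderiv ℝ t (r • v) v)
        (fderiv ℝ (fderiv ℝ t) 0 v v) 0 := by
      have hΦ' : HasFDerivAt (fun x => fderiv ℝ t x v)
          ((ContinuousLinearMap.apply ℝ ℝ v).comp (fderiv ℝ (fderiv ℝ t) 0))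
          ((fun r : ℝ => r • v) 0) := by simpa using hΦ
      have := hΦ'.comp_hasDerivAt 0 (hlineD 0)
      exact this
    have h6 : deriv (deriv ψ) 0 = fderiv ℝ (fderiv ℝ t) 0 v v := by
      rw [hderiv_eq]
      exact hder2.deriv
    rw [← h6, hψ2, hQ]
  exact ⟨fun v => (key v).1, fun v => (key v).2⟩

lemma aux_polarize (ht : ContDiff ℝ (⊤ : ℕ∞) t)
    (hBvv : ∀ v : ℝ × ℝ, fderiv ℝ (fderiv ℝ t) 0 v v
      = 2 * (t20*v.1^2 + t11*v.1*v.2 + t02*v.2^2)) (v : ℝ × ℝ) :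
    fderiv ℝ (fderiv ℝ t) 0 v ((0:ℝ),(1:ℝ)) = t11 * v.1 + 2*t02*v.2 := by
  have hdiff : Differentiable ℝ t := ht.differentiable (by simp)
  have hfd : ContDiff ℝ (⊤ : ℕ∞) (fderiv ℝ t) := ht.fderiv_right (by simp)
  set B := fderiv ℝ (fderiv ℝ t) 0 with hB
  have hBat : HasFDerivAt (fderiv ℝ t) B 0 := ((hfd.differentiable (by simp)) 0).hasFDerivAt
  have hsymm : ∀ v w : ℝ × ℝ, B v w = B w v :=
    second_derivative_symmetric (fun y => (hdiff y).hasFDerivAt) hBat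
  set e : ℝ × ℝ := ((0:ℝ),(1:ℝ)) with he
  have hexp : B (v + e) (v + e) = B v v + B v e + B e v + B e e := by
    simp [map_add, ContinuousLinearMap.add_apply]
    ring
  have h1 := hBvv (v + e)
  have h2 := hBvv v
  have h3 := hBvv e
  have hsy := hsymm v e
  rw [hexp, h2, h3, hsy] at h1
  simp only [he, Prod.fst_add, Prod.snd_add] at h1 h2 h3 ⊢
  simp at h1 ⊢
  nlinarith [h1]

end Aux2

set_option maxHeartbeats 1000000 in
/-- Near an A₄ diagonal point the pre-symmetry set is the graph
`t(s,u) = t₂₀s² + t₁₁su + t₀₂u² + h.o.t.` with `t₁₁ = (4/3)t₀₂`, `t₀₂ ≠ 0`, and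
`h : (s,u) ↦ (s, t(s,u))` is a fold: the critical set `Σ = {∂t/∂u = 0}` is a smooth
curve through the origin with tangent line `2s + 3u = 0` (direction `(3,−2)`), and
`h` restricted to `Σ` is an immersion at the origin. -/
theorem stmt14 (t : ℝ × ℝ → ℝ) (t20 t11 t02 : ℝ) (ht : ContDiff ℝ (⊤ : ℕ∞) t)
    (hjet : (fun p : ℝ × ℝ => t p - (t20*p.1^2 + t11*p.1*p.2 + t02*p.2^2))
        =o[nhds (0 : ℝ × ℝ)] fun p : ℝ × ℝ => ‖p‖^2)
    (hrel : t11 = (4/3)*t02) (h02 : t02 ≠ 0) :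
    preSymD t (0, 0) = 0 ∧
    fderiv ℝ (preSymD t) (0, 0) ((3 : ℝ), (-2 : ℝ)) = 0 ∧
    fderiv ℝ (preSymD t) (0, 0) ≠ 0 ∧
    ∃ (ε : ℝ) (γ : ℝ → ℝ × ℝ) (c : ℝ), 0 < ε ∧ c ≠ 0 ∧ ContDiff ℝ (⊤ : ℕ∞) γ ∧
      γ 0 = (0, 0) ∧ deriv γ 0 = c • ((3 : ℝ), (-2 : ℝ)) ∧
      (∀ y : ℝ, |y| < ε → preSymD t (γ y) = 0) ∧
      (∀ p : ℝ × ℝ, ‖p‖ < ε → preSymD t p = 0 → ∃ y : ℝ, |y| < ε ∧ γ y = p) ∧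
      deriv (fun y => ((γ y).1, t (γ y))) 0 ≠ 0 := by
  classical
  open Filter Topology ContinuousLinearMap in
  obtain ⟨hgrad, hBvv⟩ := aux_jet_extract ht hjet
  have hpol := aux_polarize ht hBvv
  set F := preSymD t with hFdef
  have hFs : ContDiff ℝ (⊤ : ℕ∞) F := aux_preSymD_smooth ht
  have hfd : ContDiff ℝ (⊤ : ℕ∞) (fderiv ℝ t) := ht.fderiv_right (by simp)
  -- the linear functional L v = t11 v.1 + 2 t02 v.2
  set L : ℝ × ℝ →L[ℝ] ℝ :=
    t11 • (ContinuousLinearMap.fst ℝ ℝ ℝ) + (2*t02) • (ContinuousLinearMap.snd ℝ ℝ ℝ) with hLdef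
  have hLap : ∀ v : ℝ × ℝ, L v = t11 * v.1 + 2*t02*v.2 := by
    intro v
    simp [hLdef]
  -- F 0 = 0
  have hF0 : F 0 = 0 := by
    rw [hFdef, aux_preSymD_eq ht]
    exact hgrad _
  -- HasFDerivAt F L 0
  have hBat : HasFDerivAt (fderiv ℝ t) (fderiv ℝ (fderiv ℝ t) 0) 0 :=
    ((hfd.differentiable (by simp)) 0).hasFDerivAt
  have hFL : HasFDerivAt F L 0 := by
    have h1 : HasFDerivAt (fun p => fderiv ℝ t p ((0:ℝ),(1:ℝ)))
        ((ContinuousLinearMap.apply ℝ ℝ ((0:ℝ),(1:ℝ))).comp (fderiv ℝ (fderiv ℝ t) 0)) 0 :=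
      (ContinuousLinearMap.apply ℝ ℝ ((0:ℝ),(1:ℝ))).hasFDerivAt.comp 0 hBat
    have h2 : ((ContinuousLinearMap.apply ℝ ℝ ((0:ℝ),(1:ℝ))).comp
        (fderiv ℝ (fderiv ℝ t) 0)) = L := by
      apply ContinuousLinearMap.ext
      intro v
      simp only [ContinuousLinearMap.comp_apply, ContinuousLinearMap.apply_apply]
      rw [hpol v, hLap v]
    have h3 : HasFDerivAt (fun p => fderiv ℝ t p ((0:ℝ),(1:ℝ))) L 0 := h2 ▸ h1
    have h4 : F = (fun p => fderiv ℝ t p ((0:ℝ),(1:ℝ))) := funext (aux_preSymD_eq ht)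
    rw [h4]
    exact h3
  have hzz : ((0,0) : ℝ × ℝ) = (0 : ℝ × ℝ) := rfl
  have hfderivF : fderiv ℝ F 0 = L := hFL.fderiv
  refine ⟨?_, ?_, ?_, ?_⟩
  · rw [hzz]; exact hF0
  · rw [hzz, hfderivF, hLap]
    simp
    rw [hrel]; ring
  · rw [hzz, hfderivF]
    intro hcon
    have h4 : L ((0:ℝ),(1:ℝ)) = 0 := by rw [hcon]; rfl
    rw [hLap] at h4
    simp at h4
    exact h02 h4
  -- Part C : the fold curve
  have hL01 : L ((0:ℝ),(1:ℝ)) ≠ 0 := by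
    rw [hLap]
    intro h4
    apply h02
    simp at h4
    linarith
  set G : ℝ × ℝ → ℝ × ℝ := fun p => (p.1, F p) with hGdef
  have hGs : ContDiff ℝ (⊤ : ℕ∞) G := contDiff_fst.prodMk hFs
  set W : Set (ℝ × ℝ) := {p | fderiv ℝ F p ((0:ℝ),(1:ℝ)) ≠ 0} with hWdef
  have hWopen : IsOpen W := by
    have hc : Continuous fun p => fderiv ℝ F p ((0:ℝ),(1:ℝ)) :=
      ContDiff.continuous (n := ((⊤ : ℕ∞) : WithTop ℕ∞))
        ((hFs.fderiv_right (by exact_mod_cast le_top)).clm_apply contDiff_const)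
    exact isOpen_ne.preimage hc
  have h0W : (0 : ℝ×ℝ) ∈ W := by
    show fderiv ℝ F 0 ((0:ℝ),(1:ℝ)) ≠ 0
    rw [hfderivF]; exact hL01
  have hstrict : HasStrictFDerivAt G ((auxEquiv L hL01 : (ℝ×ℝ) →L[ℝ] (ℝ×ℝ))) 0 := by
    apply hGs.contDiffAt.hasStrictFDerivAt' _ (by simp)
    rw [auxEquiv_coe]
    exact (hasFDerivAt_fst).prodMk hFL
  set e := hstrict.toOpenPartialHomeomorph G with hedef
  have hesrc : (0:ℝ×ℝ) ∈ e.source := hstrict.mem_toOpenPartialHomeomorph_source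
  have hG0 : G 0 = 0 := by
    show ((0:ℝ×ℝ).1, F 0) = (0 : ℝ×ℝ)
    rw [hF0]
    rfl
  set S : Set (ℝ×ℝ) := e.source ∩ W with hSdef
  have hSopen : IsOpen S := e.open_source.inter hWopen
  have h0S : (0:ℝ×ℝ) ∈ S := ⟨hesrc, h0W⟩
  have hsymmAt : ∀ p ∈ S, ContDiffAt ℝ (⊤ : ℕ∞) (e.symm) (G p) := by
    intro p hp
    have hps : p ∈ e.source := hp.1
    have hsy : e.symm (G p) = p := e.left_inv hps
    have hfdp : HasFDerivAt G ((auxEquiv (fderiv ℝ F p) hp.2 : (ℝ×ℝ) →L[ℝ] (ℝ×ℝ))) p := by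
      rw [auxEquiv_coe]
      exact (hasFDerivAt_fst).prodMk ((hFs.differentiable (by simp) p).hasFDerivAt)
    exact e.contDiffAt_symm (e.map_source hps) (by rw [hsy]; exact hfdp)
      (by rw [hsy]; exact hGs.contDiffAt)
  set γ₀ : ℝ → ℝ×ℝ := fun z => e.symm (z, (0:ℝ)) with hγ₀def
  set Ω : Set ℝ := {z : ℝ | ∃ p ∈ S, G p = ((z:ℝ), (0:ℝ))} with hΩdef
  have hΩopen : IsOpen Ω := by
    have h1 : IsOpen ((e : ℝ×ℝ → ℝ×ℝ) '' S) :=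
      e.isOpen_image_of_subset_source hSopen Set.inter_subset_left
    have h2 : Continuous fun z : ℝ => ((z:ℝ), (0:ℝ)) := continuous_id.prodMk continuous_const
    have h3 : Ω = (fun z : ℝ => ((z:ℝ),(0:ℝ))) ⁻¹' ((e : ℝ×ℝ → ℝ×ℝ) '' S) := by
      ext z
      simp [hΩdef, Set.mem_image, show (e : ℝ×ℝ → ℝ×ℝ) = G from rfl]
    rw [h3]
    exact h1.preimage h2
  have h0Ω : (0:ℝ) ∈ Ω := ⟨0, h0S, by rw [hG0]; rfl⟩
  have hΩz : ∀ z ∈ Ω, F (γ₀ z) = 0 ∧ (γ₀ z).1 = z ∧ ContDiffAt ℝ (⊤ : ℕ∞) γ₀ z := by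
    intro z hz
    obtain ⟨p, hpS, hGp⟩ := hz
    have hγp : γ₀ z = p := by
      show e.symm (z, (0:ℝ)) = p
      rw [← hGp]
      exact e.left_inv hpS.1
    refine ⟨?_, ?_, ?_⟩
    · rw [hγp]
      have h5 := congrArg Prod.snd hGp
      simpa using h5
    · rw [hγp]
      have h5 := congrArg Prod.fst hGp
      simpa using h5
    · have hs := hsymmAt p hpS
      rw [hGp] at hs
      exact hs.comp z ((contDiff_id.prodMk contDiff_const).contDiffAt)
  have hγ₀0 : γ₀ 0 = 0 := by
    show e.symm ((0:ℝ), (0:ℝ)) = 0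
    have h5 : ((0:ℝ),(0:ℝ)) = G 0 := hG0.symm
    rw [h5]
    exact e.left_inv hesrc
  have hsymd : HasFDerivAt (e.symm)
      (((auxEquiv L hL01).symm : (ℝ×ℝ) →L[ℝ] (ℝ×ℝ))) ((0:ℝ),(0:ℝ)) := by
    have h1 := hstrict.to_localInverse
    have h2 := h1.hasFDerivAt
    rw [hG0] at h2
    exact h2
  have hγ₀d : HasDerivAt γ₀ ((auxEquiv L hL01).symm ((1:ℝ),(0:ℝ))) 0 := by
    have hin : HasDerivAt (fun z : ℝ => ((z:ℝ), (0:ℝ))) ((1:ℝ),(0:ℝ)) 0 :=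
      (hasDerivAt_id 0).prodMk (hasDerivAt_const 0 0)
    have h5 := HasFDerivAt.comp_hasDerivAt (f := fun z : ℝ => ((z:ℝ), (0:ℝ))) 0 hsymd hin
    exact h5
  have hval : (auxEquiv L hL01).symm ((1:ℝ),(0:ℝ)) = ((1:ℝ), -(2/3 : ℝ)) := by
    rw [ContinuousLinearEquiv.symm_apply_eq, auxEquiv_apply]
    have h5 : L ((1:ℝ), -(2/3:ℝ)) = 0 := by
      rw [hLap]
      simp
      rw [hrel]; ring
    rw [h5]
  obtain ⟨ρ, hρpos, hρsub⟩ := Metric.isOpen_iff.1 hΩopen 0 h0Ω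
  obtain ⟨ε₂, hε₂pos, hε₂sub⟩ := Metric.isOpen_iff.1 hSopen 0 h0S
  have hρne : ρ ≠ 0 := ne_of_gt hρpos
  set χ : ℝ → ℝ := fun y => ρ * ((Real.exp (4*y/ρ) - 1)/(Real.exp (4*y/ρ) + 1)) with hχdef
  have hEpos : ∀ y : ℝ, (0:ℝ) < Real.exp (4*y/ρ) := fun y => Real.exp_pos _
  have hχs : ContDiff ℝ (⊤ : ℕ∞) χ := by
    apply ContDiff.mul contDiff_const
    apply ContDiff.div
    · exact (Real.contDiff_exp.comp
        ((contDiff_const.mul contDiff_id).div_const ρ)).sub contDiff_const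
    · exact (Real.contDiff_exp.comp
        ((contDiff_const.mul contDiff_id).div_const ρ)).add contDiff_const
    · intro y
      positivity
  have hχball : ∀ y : ℝ, χ y ∈ Metric.ball (0:ℝ) ρ := by
    intro y
    rw [Metric.mem_ball, Real.dist_eq, sub_zero]
    show |ρ * ((Real.exp (4*y/ρ) - 1)/(Real.exp (4*y/ρ) + 1))| < ρ
    have hE := hEpos y
    rw [abs_mul, abs_of_pos hρpos, abs_div,
      abs_of_pos (by linarith : (0:ℝ) < Real.exp (4*y/ρ) + 1)]
    have h1 : |Real.exp (4*y/ρ) - 1| < Real.exp (4*y/ρ) + 1 := by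
      rw [abs_lt]
      constructor <;> nlinarith
    calc ρ * (|Real.exp (4*y/ρ) - 1| / (Real.exp (4*y/ρ) + 1)) < ρ * 1 := by
          apply mul_lt_mul_of_pos_left _ hρpos
          rw [div_lt_one (by linarith)]
          exact h1
      _ = ρ := mul_one ρ
  have hχ0 : χ 0 = 0 := by
    show ρ * ((Real.exp (4*0/ρ) - 1)/(Real.exp (4*0/ρ) + 1)) = 0
    simp
  have hχd : HasDerivAt χ 2 0 := by
    have hin : HasDerivAt (fun y : ℝ => 4*y/ρ) (4/ρ) 0 := by
      simpa using ((hasDerivAt_id (0:ℝ)).const_mul 4).div_const ρ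
    have hE : HasDerivAt (fun y : ℝ => Real.exp (4*y/ρ)) (4/ρ) 0 := by
      have h5 := hin.exp
      simpa using h5
    have hnum := hE.sub_const 1
    have hden := hE.add_const 1
    have hd0 : Real.exp (4*0/ρ) + 1 ≠ 0 := by
      have := hEpos 0
      intro h
      linarith
    have hq := hnum.div hden hd0
    have h5 := hq.const_mul ρ
    refine h5.congr_deriv ?_
    have he0 : Real.exp (4*0/ρ) = 1 := by norm_num
    rw [he0]
    field_simp
    ring
  set γ : ℝ → ℝ×ℝ := fun y => γ₀ (χ y) with hγdef
  have hγs : ContDiff ℝ (⊤ : ℕ∞) γ := by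
    rw [contDiff_iff_contDiffAt]
    intro y
    exact ((hΩz (χ y) (hρsub (hχball y))).2.2).comp y hχs.contDiffAt
  have hγd : HasDerivAt γ ((2:ℝ) • ((1:ℝ), -(2/3:ℝ))) 0 := by
    have h1 : HasDerivAt γ₀ ((1:ℝ), -(2/3:ℝ)) (χ 0) := by
      rw [hχ0, ← hval]
      exact hγ₀d
    exact HasDerivAt.scomp 0 h1 hχd
  set ε : ℝ := min (ρ/2) ε₂ with hεdef
  have hεpos : 0 < ε := lt_min (by linarith) hε₂pos
  refine ⟨ε, γ, 2/3, hεpos, by norm_num, hγs, ?_, ?_, ?_, ?_, ?_⟩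
  · show γ₀ (χ 0) = ((0:ℝ), (0:ℝ))
    rw [hχ0, hγ₀0]
    rfl
  · rw [hγd.deriv]
    have : ((2:ℝ) • ((1:ℝ), -(2/3:ℝ)) : ℝ×ℝ) = ((2:ℝ), -(4/3:ℝ)) := by
      rw [Prod.smul_mk]
      norm_num
    rw [this]
    have : ((2/3:ℝ) • ((3:ℝ), (-2:ℝ)) : ℝ×ℝ) = ((2:ℝ), -(4/3:ℝ)) := by
      rw [Prod.smul_mk]
      norm_num
    rw [this]
  · intro y _
    exact (hΩz (χ y) (hρsub (hχball y))).1
  · intro p hpnorm hpF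
    have hεe2 : ε ≤ ε₂ := min_le_right _ _
    have hερ : ε ≤ ρ/2 := min_le_left _ _
    have hpS : p ∈ S := by
      apply hε₂sub
      rw [Metric.mem_ball, dist_zero_right]
      exact lt_of_lt_of_le hpnorm hεe2
    have hGp : G p = (p.1, (0:ℝ)) := by
      show (p.1, F p) = (p.1, (0:ℝ))
      rw [hpF]
    have hγ₀p : γ₀ p.1 = p := by
      show e.symm (p.1, (0:ℝ)) = p
      rw [← hGp]
      exact e.left_inv hpS.1
    have hp1 : |p.1| < ε := lt_of_le_of_lt (by simpa using norm_fst_le p) hpnorm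
    set u : ℝ := p.1/ρ with hudef
    have hu2 : |u| ≤ 1/2 := by
      rw [hudef, abs_div, abs_of_pos hρpos, div_le_iff₀ hρpos]
      linarith
    have h1u : (0:ℝ) < 1 - u := by
      have := abs_le.1 hu2
      linarith [this.2]
    have h2u : (0:ℝ) < 1 + u := by
      have := abs_le.1 hu2
      linarith [this.1]
    have h1une : (1:ℝ) - u ≠ 0 := ne_of_gt h1u
    set y : ℝ := ρ/4 * Real.log ((1+u)/(1-u)) with hydef
    have hexpv : Real.exp (4*y/ρ) = (1+u)/(1-u) := by
      rw [hydef, show 4*(ρ/4 * Real.log ((1+u)/(1-u)))/ρ = Real.log ((1+u)/(1-u)) by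
        field_simp]
      exact Real.exp_log (by positivity)
    have hχy : χ y = p.1 := by
      show ρ * ((Real.exp (4*y/ρ) - 1)/(Real.exp (4*y/ρ) + 1)) = p.1
      rw [hexpv]
      have hv1 : (1+u)/(1-u) - 1 = 2*u/(1-u) := by
        field_simp
        ring
      have hv2 : (1+u)/(1-u) + 1 = 2/(1-u) := by
        field_simp
        ring
      rw [hv1, hv2]
      have hv3 : (2*u/(1-u))/(2/(1-u)) = u := by
        field_simp
      rw [hv3, hudef]
      field_simp
    have hlog := aux_log_ratio_bound u hu2
    have hybound : |y| < ε := by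
      rw [hydef, abs_mul, abs_of_pos (by linarith : (0:ℝ) < ρ/4)]
      have h5 : |u| = |p.1|/ρ := by rw [hudef, abs_div, abs_of_pos hρpos]
      calc ρ/4 * |Real.log ((1+u)/(1-u))| ≤ ρ/4 * (3 * |u|) :=
            mul_le_mul_of_nonneg_left hlog (by linarith)
        _ = 3/4 * |p.1| := by rw [h5]; field_simp
        _ ≤ |p.1| := by nlinarith [abs_nonneg p.1]
        _ < ε := hp1
    refine ⟨y, hybound, ?_⟩
    show γ₀ (χ y) = p
    rw [hχy, hγ₀p]
  · have hd1 : HasDerivAt (fun y => (γ y).1) (2:ℝ) 0 := by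
      have h5 := (ContinuousLinearMap.fst ℝ ℝ ℝ).hasFDerivAt.comp_hasDerivAt 0 hγd
      exact h5.congr_deriv (by simp)
    have hd2 : HasDerivAt (fun y => t (γ y))
        (fderiv ℝ t (γ 0) ((2:ℝ) • ((1:ℝ), -(2/3:ℝ)))) 0 :=
      (ht.differentiable (by simp) (γ 0)).hasFDerivAt.comp_hasDerivAt 0 hγd
    have hpair := hd1.prodMk hd2
    rw [hpair.deriv]
    intro hcon
    have h5 := congrArg Prod.fst hcon
    simp at h5
end

section
/- Suppose at an A₅ point the pre-symmetry set graph has the form t(s,u) = (b₁/(κ₁−κ₂))s² + t₃₀s³ + t₂₁s²u + t₂₁su² + (2/3)t₂₁u³ + h.o.t. with t₂₁ ≠ 0. Then the critical set of (s,u) ↦ (s,t(s,u)), given by ∂t/∂u = t₂₁(s² + 2su + 2u²) + h.o.t. = 0, has an isolated point at the origin, because the quadratic form s² + 2su + 2u² has negative discriminant (−4) and is hence positive definite. Consequently the map is of lips type and beaks cannot occur. -/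
open Asymptotics

/-- Directional derivative of a function of two variables along `u`. -/
noncomputable def duD (g : ℝ × ℝ → ℝ) : ℝ × ℝ → ℝ :=
  fun p => fderiv ℝ g p ((0 : ℝ), (1 : ℝ))

lemma contDiff_duD {g : ℝ × ℝ → ℝ} (hg : ContDiff ℝ (⊤ : ℕ∞) g) : ContDiff ℝ (⊤ : ℕ∞) (duD g) :=
  (hg.fderiv_right (by simp)).clm_apply contDiff_const

lemma slice_duD {g : ℝ × ℝ → ℝ} (hg : Differentiable ℝ g) (a x : ℝ) :
    HasDerivAt (fun y => g (a, y)) (duD g (a, x)) x := by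
  have h1 : HasDerivAt (fun y : ℝ => ((a : ℝ), y)) ((0 : ℝ), (1 : ℝ)) x :=
    (hasDerivAt_const x a).prodMk (hasDerivAt_id x)
  simpa [duD, Function.comp_def] using ((hg (a, x)).hasFDerivAt.comp_hasDerivAt x h1)

lemma mvtAbs {f f' : ℝ → ℝ} {C a b : ℝ} (hab : a ≤ b)
    (hd : ∀ x ∈ Set.Icc a b, HasDerivAt f (f' x) x)
    (hC : ∀ x ∈ Set.Icc a b, |f' x| ≤ C) : |f b - f a| ≤ C * (b - a) := by
  have h := norm_image_sub_le_of_norm_deriv_le_segment'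
    (fun x hx => (hd x hx).hasDerivWithinAt)
    (fun x hx => hC x (Set.Ico_subset_Icc_self hx)) b (Set.right_mem_Icc.2 hab)
  simpa using h

lemma cubicDeriv (A B C D x : ℝ) :
    HasDerivAt (fun y : ℝ => A + B*y + C*y^2 + D*y^3) (B + 2*C*x + 3*D*x^2) x := by
  have h2 : HasDerivAt (fun y : ℝ => y^2) (2*x) x := by simpa using hasDerivAt_pow 2 x
  have h3 : HasDerivAt (fun y : ℝ => y^3) (3*x^2) x := by simpa using hasDerivAt_pow 3 x
  have hy : HasDerivAt (fun y : ℝ => y) 1 x := hasDerivAt_id x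
  have h := (((hy.const_mul B).const_add A).add (h2.const_mul C)).add (h3.const_mul D)
  exact h.congr_deriv (by ring)

lemma duD_zero {g : ℝ × ℝ → ℝ} (hg : ContDiff ℝ (⊤ : ℕ∞) g)
    (hjet : g =o[nhds (0 : ℝ × ℝ)] fun p => ‖p‖ ^ 3) : duD g (0, 0) = 0 := by
  have hgdiff : Differentiable ℝ g := hg.differentiable (by simp)
  have hd : HasDerivAt (fun y => g (0, y)) (duD g (0, 0)) 0 := slice_duD hgdiff 0 0
  have htend : Filter.Tendsto (fun y : ℝ => ((0 : ℝ), y)) (nhds 0) (nhds (0 : ℝ × ℝ)) := by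
    have h : Continuous (fun y : ℝ => ((0 : ℝ), y)) := continuous_const.prodMk continuous_id
    exact h.tendsto 0
  have h1 := hjet.comp_tendsto htend
  have hcomp : (fun y : ℝ => g (0, y)) =o[nhds (0 : ℝ)] fun y => y := by
    refine h1.trans_isBigO ?_
    rw [Asymptotics.isBigO_iff]
    refine ⟨1, ?_⟩
    filter_upwards [Metric.ball_mem_nhds (0 : ℝ) one_pos] with y hy
    rw [Metric.mem_ball, Real.dist_eq, sub_zero] at hy
    have hnorm : ‖((0 : ℝ), y)‖ = |y| := by
      simp [Prod.norm_def]
    simp only [Function.comp_apply, hnorm, Real.norm_eq_abs, abs_pow, abs_abs]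
    nlinarith [abs_nonneg y, mul_nonneg (abs_nonneg y) (abs_nonneg y)]
  have h00 : g 0 = 0 := by
    have h3 := (hcomp.def one_pos).self_of_nhds
    simp only [Real.norm_eq_abs, norm_zero, mul_zero, one_mul, abs_zero] at h3
    have h4 : |g 0| ≤ 0 := h3
    exact abs_eq_zero.1 (le_antisymm h4 (abs_nonneg _))
  have hd0 : HasDerivAt (fun y => g (0, y)) 0 0 := by
    rw [hasDerivAt_iff_isLittleO]
    simpa [show g (0, 0) = 0 from h00] using hcomp
  exact hd.unique hd0

lemma key_bound {g : ℝ × ℝ → ℝ} (hg : ContDiff ℝ (⊤ : ℕ∞) g)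
    (hjet : g =o[nhds (0 : ℝ × ℝ)] fun p => ‖p‖ ^ 3) {c : ℝ} (hc : 0 < c) :
    ∃ ε : ℝ, 0 < ε ∧ ∀ p : ℝ × ℝ, ‖p‖ < ε → |duD g p| ≤ c * ‖p‖ ^ 2 := by
  have hgdiff : Differentiable ℝ g := hg.differentiable (by simp)
  have hg1 : ContDiff ℝ (⊤ : ℕ∞) (duD g) := contDiff_duD hg
  have hg2 : ContDiff ℝ (⊤ : ℕ∞) (duD (duD g)) := contDiff_duD hg1
  have hg3 : ContDiff ℝ (⊤ : ℕ∞) (duD (duD (duD g))) := contDiff_duD hg2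
  obtain ⟨M, hM⟩ := (isCompact_closedBall (0 : ℝ × ℝ) 1).exists_bound_of_continuousOn
      hg3.continuous.continuousOn
  have hM0 : 0 ≤ M := le_trans (norm_nonneg _) (hM 0 (Metric.mem_closedBall_self zero_le_one))
  set δ : ℝ := min 1 (Real.sqrt (c / (2 * (M + 1)))) with hδdef
  have hδpos : 0 < δ := lt_min one_pos (Real.sqrt_pos.2 (by positivity))
  have hδ1 : δ ≤ 1 := min_le_left _ _
  have hδsq : M * δ ^ 2 ≤ c / 2 := by
    have h1 : δ ≤ Real.sqrt (c / (2 * (M + 1))) := min_le_right _ _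
    have h2 : δ ^ 2 ≤ c / (2 * (M + 1)) := by
      rw [← Real.sq_sqrt (by positivity : (0 : ℝ) ≤ c / (2 * (M + 1)))]
      exact pow_le_pow_left₀ hδpos.le h1 2
    have h3 : M * δ ^ 2 ≤ (M + 1) * (c / (2 * (M + 1))) := by nlinarith
    calc M * δ ^ 2 ≤ (M + 1) * (c / (2 * (M + 1))) := h3
      _ = c / 2 := by field_simp
  set ε' : ℝ := δ * c / 16 with hε'def
  have hε'pos : 0 < ε' := by positivity
  obtain ⟨r, hrpos, hr⟩ : ∃ r > 0, ∀ q : ℝ × ℝ, ‖q‖ < r → |g q| ≤ ε' * ‖q‖ ^ 3 := by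
    have h := hjet.def hε'pos
    rw [Metric.eventually_nhds_iff] at h
    obtain ⟨r, hrpos, hr⟩ := h
    refine ⟨r, hrpos, fun q hq => ?_⟩
    have := hr (show dist q 0 < r by simpa [dist_zero_right] using hq)
    simpa [Real.norm_eq_abs, abs_norm, abs_pow] using this
  refine ⟨min (1/2) (r/2), by positivity, fun p hp => ?_⟩
  rcases eq_or_lt_of_le (norm_nonneg p) with h0 | hppos
  · have hp0 : p = 0 := norm_eq_zero.1 h0.symm
    subst hp0
    have hz : duD g 0 = 0 := duD_zero hg hjet
    simp [hz]
  obtain ⟨s, u⟩ := p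
  set N : ℝ := ‖((s, u) : ℝ × ℝ)‖ with hNdef
  have hs_le : |s| ≤ N := by
    rw [← Real.norm_eq_abs]; exact norm_fst_le ((s, u) : ℝ × ℝ)
  have hu_le : |u| ≤ N := by
    rw [← Real.norm_eq_abs]; exact norm_snd_le ((s, u) : ℝ × ℝ)
  have hN1 : 2 * N ≤ 1 := by
    have := lt_of_lt_of_le hp (min_le_left _ _); linarith
  have hNr : 2 * N < r := by
    have := lt_of_lt_of_le hp (min_le_right _ _); linarith
  set h : ℝ := δ * N with hhdef
  have hh : 0 < h := mul_pos hδpos hppos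
  have hhN : h ≤ N := by nlinarith
  have hpt : ∀ x : ℝ, |x - u| ≤ h → ‖((s, x) : ℝ × ℝ)‖ ≤ 2 * N := by
    intro x hx
    have h1 : |x| ≤ N + h := by
      have := abs_sub_abs_le_abs_sub x u
      linarith
    rw [Prod.norm_def]
    apply max_le
    · rw [Real.norm_eq_abs]; linarith
    · rw [Real.norm_eq_abs]; linarith
  have hball : ∀ x : ℝ, |x - u| ≤ h → |duD (duD (duD g)) (s, x)| ≤ M := by
    intro x hx
    have h1 : ((s, x) : ℝ × ℝ) ∈ Metric.closedBall (0 : ℝ × ℝ) 1 := by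
      rw [Metric.mem_closedBall, dist_zero_right]
      linarith [hpt x hx]
    simpa [Real.norm_eq_abs] using hM _ h1
  have S1 : ∀ a x : ℝ, HasDerivAt (fun y => g (a, y)) (duD g (a, x)) x :=
    fun a x => slice_duD hgdiff a x
  have S2 : ∀ a x : ℝ, HasDerivAt (fun y => duD g (a, y)) (duD (duD g) (a, x)) x :=
    fun a x => slice_duD (hg1.differentiable (by simp)) a x
  have S3 : ∀ a x : ℝ, HasDerivAt (fun y => duD (duD g) (a, y)) (duD (duD (duD g)) (a, x)) x :=
    fun a x => slice_duD (hg2.differentiable (by simp)) a x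
  -- Step A : second derivative symmetric difference bound
  have stepA : ∀ h' ∈ Set.Icc (0 : ℝ) h,
      |duD (duD g) (s, u + h') - duD (duD g) (s, u - h')| ≤ 2 * M * h := by
    intro h' hh'
    have hab : u - h' ≤ u + h' := by linarith [hh'.1]
    have hbnd : ∀ x ∈ Set.Icc (u - h') (u + h'), |duD (duD (duD g)) (s, x)| ≤ M := by
      intro x hx
      apply hball
      rw [abs_sub_le_iff]
      constructor <;> [linarith [hx.2, hh'.2]; linarith [hx.1, hh'.2]]
    have hm := mvtAbs hab (fun x _ => S3 s x) hbnd
    calc |duD (duD g) (s, u + h') - duD (duD g) (s, u - h')|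
        ≤ M * ((u + h') - (u - h')) := hm
      _ = M * (2 * h') := by ring
      _ ≤ 2 * M * h := by nlinarith [mul_nonneg hM0 (sub_nonneg.2 hh'.2)]
  -- Step B : first derivative second difference bound
  have stepB : ∀ h' ∈ Set.Icc (0 : ℝ) h,
      |duD g (s, u + h') + duD g (s, u - h') - 2 * duD g (s, u)| ≤ (2 * M * h) * h' := by
    intro h' hh'
    set F : ℝ → ℝ := fun y => duD g (s, u + y) + duD g (s, u - y) - 2 * duD g (s, u) with hF
    have hFd : ∀ y : ℝ,
        HasDerivAt F (duD (duD g) (s, u + y) - duD (duD g) (s, u - y)) y := by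
      intro y
      have hi1 : HasDerivAt (fun y : ℝ => u + y) 1 y := (hasDerivAt_id y).const_add u
      have hi2 : HasDerivAt (fun y : ℝ => u - y) (-1) y := (hasDerivAt_id y).const_sub u
      have h1 : HasDerivAt (fun y => duD g (s, u + y)) (duD (duD g) (s, u + y)) y := by
        simpa [Function.comp_def] using (S2 s (u + y)).comp y hi1
      have h2 : HasDerivAt (fun y => duD g (s, u - y)) (-(duD (duD g) (s, u - y))) y := by
        simpa [Function.comp_def] using (S2 s (u - y)).comp y hi2
      have := (h1.add h2).sub (hasDerivAt_const y (2 * duD g (s, u)))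
      exact this.congr_deriv (by ring)
    have hbnd : ∀ x ∈ Set.Icc (0 : ℝ) h',
        |duD (duD g) (s, u + x) - duD (duD g) (s, u - x)| ≤ 2 * M * h := by
      intro x hx
      exact stepA x ⟨hx.1, le_trans hx.2 hh'.2⟩
    have hm := mvtAbs hh'.1 (fun x _ => hFd x) hbnd
    have hF0 : F 0 = 0 := by simp [hF]; ring
    simpa [hF0] using hm
  -- Step C : function second difference bound
  have stepC : |g (s, u + h) - g (s, u - h) - 2 * h * duD g (s, u)| ≤ (2 * M * h^2) * h := by
    set E : ℝ → ℝ := fun y => g (s, u + y) - g (s, u - y) - 2 * y * duD g (s, u) with hE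
    have hEd : ∀ y : ℝ,
        HasDerivAt E (duD g (s, u + y) + duD g (s, u - y) - 2 * duD g (s, u)) y := by
      intro y
      have hi1 : HasDerivAt (fun y : ℝ => u + y) 1 y := (hasDerivAt_id y).const_add u
      have hi2 : HasDerivAt (fun y : ℝ => u - y) (-1) y := (hasDerivAt_id y).const_sub u
      have h1 : HasDerivAt (fun y => g (s, u + y)) (duD g (s, u + y)) y := by
        simpa [Function.comp_def] using (S1 s (u + y)).comp y hi1
      have h2 : HasDerivAt (fun y => g (s, u - y)) (-(duD g (s, u - y))) y := by
        simpa [Function.comp_def] using (S1 s (u - y)).comp y hi2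
      have h3 : HasDerivAt (fun y : ℝ => 2 * y * duD g (s, u)) (2 * duD g (s, u)) y := by
        have := ((hasDerivAt_id y).const_mul 2).mul_const (duD g (s, u))
        simpa using this
      have := (h1.sub h2).sub h3
      exact this.congr_deriv (by ring)
    have hbnd : ∀ x ∈ Set.Icc (0 : ℝ) h,
        |duD g (s, u + x) + duD g (s, u - x) - 2 * duD g (s, u)| ≤ 2 * M * h^2 := by
      intro x hx
      calc |duD g (s, u + x) + duD g (s, u - x) - 2 * duD g (s, u)|
          ≤ (2 * M * h) * x := stepB x hx
        _ ≤ 2 * M * h^2 := by nlinarith [mul_nonneg (mul_nonneg hM0 hh.le) (sub_nonneg.2 hx.2)]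
    have hm := mvtAbs hh.le (fun x _ => hEd x) hbnd
    have hE0 : E 0 = 0 := by simp [hE]
    simpa [hE0] using hm
  -- Step D : final assembly
  have hup : |g (s, u + h)| ≤ ε' * (2 * N)^3 := by
    have h1 : ‖((s, u + h) : ℝ × ℝ)‖ ≤ 2 * N := hpt (u + h) (by simp [abs_of_nonneg hh.le])
    have h2 := hr _ (lt_of_le_of_lt h1 hNr)
    calc |g (s, u + h)| ≤ ε' * ‖((s, u + h) : ℝ × ℝ)‖ ^ 3 := h2
      _ ≤ ε' * (2 * N)^3 := by
          apply mul_le_mul_of_nonneg_left _ hε'pos.le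
          exact pow_le_pow_left₀ (norm_nonneg _) h1 3
  have hdn : |g (s, u - h)| ≤ ε' * (2 * N)^3 := by
    have h1 : ‖((s, u - h) : ℝ × ℝ)‖ ≤ 2 * N := by
      apply hpt
      rw [show u - h - u = -h by ring, abs_neg, abs_of_nonneg hh.le]
    have h2 := hr _ (lt_of_le_of_lt h1 hNr)
    calc |g (s, u - h)| ≤ ε' * ‖((s, u - h) : ℝ × ℝ)‖ ^ 3 := h2
      _ ≤ ε' * (2 * N)^3 := by
          apply mul_le_mul_of_nonneg_left _ hε'pos.le
          exact pow_le_pow_left₀ (norm_nonneg _) h1 3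
  have habs : 2 * h * |duD g (s, u)| ≤ 16 * ε' * N^3 + 2 * M * h^3 := by
    have habc : ∀ a b z : ℝ, |a - b - z| ≤ |a| + |b| + |z| := fun a b z => by
      have h1 := abs_add_le (a - b) (-z)
      have h2 := abs_add_le a (-b)
      simp only [abs_neg] at h1 h2
      have h3 : |a - b| ≤ |a| + |b| := by rw [sub_eq_add_neg]; exact h2
      calc |a - b - z| = |a - b + -z| := by ring_nf
        _ ≤ |a - b| + |z| := h1
        _ ≤ |a| + |b| + |z| := by linarith
    have h9 := habc (g (s, u + h)) (g (s, u - h))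
      (g (s, u + h) - g (s, u - h) - 2 * h * duD g (s, u))
    have h10 : |g (s, u + h) - g (s, u - h)
        - (g (s, u + h) - g (s, u - h) - 2 * h * duD g (s, u))| = 2 * h * |duD g (s, u)| := by
      rw [show g (s, u + h) - g (s, u - h)
          - (g (s, u + h) - g (s, u - h) - 2 * h * duD g (s, u)) = 2 * h * duD g (s, u) from
          by ring, abs_mul, abs_of_pos (by linarith : (0:ℝ) < 2 * h)]
    rw [h10] at h9
    have h2 : (2 * M * h^2) * h = 2 * M * h^3 := by ring
    have h3 : ε' * (2 * N)^3 = 8 * ε' * N^3 := by ring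
    linarith [stepC, hup, hdn]
  -- divide by 2h = 2δN
  have hMh : 2 * M * h^3 ≤ 2 * δ * ((c/2) * N^3) := by
    have h5 : M * δ^2 * N^3 ≤ (c/2) * N^3 :=
      mul_le_mul_of_nonneg_right hδsq (by positivity)
    calc 2 * M * h^3 = 2 * δ * (M * δ^2 * N^3) := by rw [hhdef]; ring
      _ ≤ 2 * δ * ((c/2) * N^3) := by nlinarith
  have hfinal : (2 * δ * N) * |duD g (s, u)| ≤ (2 * δ * N) * (c * N^2) := by
    have h6 : 16 * ε' * N^3 = (δ * c) * N^3 := by rw [hε'def]; ring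
    have h7 : 2 * h * |duD g (s, u)| = (2 * δ * N) * |duD g (s, u)| := by rw [hhdef]; ring
    rw [h7] at habs
    calc (2 * δ * N) * |duD g (s, u)| ≤ 16 * ε' * N^3 + 2 * M * h^3 := habs
      _ ≤ (δ * c) * N^3 + 2 * δ * ((c/2) * N^3) := by rw [h6] at habs ⊢; linarith [hMh]
      _ = (2 * δ * N) * (c * N^2) := by ring
  exact le_of_mul_le_mul_left hfinal (by positivity)

/-- At an A₅ point the pre-symmetry set graph is
`t(s,u) = (b₁/(κ₁−κ₂))s² + t₃₀s³ + t₂₁s²u + t₂₁su² + (2/3)t₂₁u³ + h.o.t.` with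
`t₂₁ ≠ 0`. The quadratic form `s² + 2su + 2u²` has discriminant `−4 < 0`, hence is
positive definite, so the critical set `{∂t/∂u = 0}` of `(s,u) ↦ (s, t(s,u))` has an
isolated point at the origin: the map is of lips type and beaks cannot occur. -/
theorem stmt15 (t : ℝ × ℝ → ℝ) (b₁ κ₁ κ₂ t30 t21 : ℝ)
    (ht : ContDiff ℝ (⊤ : ℕ∞) t) (hκ : κ₁ ≠ κ₂) (h21 : t21 ≠ 0)
    (hjet : (fun p : ℝ × ℝ => t p -
        ((b₁/(κ₁-κ₂))*p.1^2 + t30*p.1^3 + t21*p.1^2*p.2 + t21*p.1*p.2^2 + (2/3)*t21*p.2^3))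
        =o[nhds (0 : ℝ × ℝ)] fun p : ℝ × ℝ => ‖p‖^3) :
    ((2:ℝ)^2 - 4*1*2 = -4) ∧
    (∀ s u : ℝ, (s, u) ≠ ((0:ℝ), (0:ℝ)) → 0 < s^2 + 2*s*u + 2*u^2) ∧
    preSymD t (0, 0) = 0 ∧
    ∃ ε : ℝ, 0 < ε ∧ ∀ p : ℝ × ℝ, ‖p‖ < ε → p ≠ (0, 0) → preSymD t p ≠ 0 := by
  set g : ℝ × ℝ → ℝ := fun p : ℝ × ℝ => t p -
      ((b₁/(κ₁-κ₂))*p.1^2 + t30*p.1^3 + t21*p.1^2*p.2 + t21*p.1*p.2^2 + (2/3)*t21*p.2^3)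
    with hgdef
  have hjet' : g =o[nhds (0 : ℝ × ℝ)] fun p : ℝ × ℝ => ‖p‖ ^ 3 := hjet
  have hgc : ContDiff ℝ (⊤ : ℕ∞) g := by
    apply ht.sub
    fun_prop
  have hgdiff : Differentiable ℝ g := hgc.differentiable (by simp)
  have key : ∀ p : ℝ × ℝ,
      preSymD t p = t21 * (p.1^2 + 2*p.1*p.2 + 2*p.2^2) + duD g p := by
    intro p
    have hPd := cubicDeriv ((b₁/(κ₁-κ₂))*p.1^2 + t30*p.1^3) (t21*p.1^2) (t21*p.1)
      ((2/3)*t21) p.2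
    have hgd : HasDerivAt (fun y => g (p.1, y)) (duD g (p.1, p.2)) p.2 :=
      slice_duD hgdiff p.1 p.2
    have hsum := hPd.add hgd
    have hfun : (fun y => ((b₁/(κ₁-κ₂))*p.1^2 + t30*p.1^3) + t21*p.1^2*y + t21*p.1*y^2
        + (2/3)*t21*y^3 + g (p.1, y)) = fun y => t (p.1, y) := by
      funext y
      simp only [hgdef]
      ring
    simp only [Pi.add_def] at hsum
    rw [hfun] at hsum
    have hder := hsum.deriv
    simp only [preSymD]
    rw [hder, Prod.mk.eta]
    ring
  obtain ⟨ε, hεpos, hε⟩ := key_bound hgc hjet'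
      (show (0:ℝ) < |t21|/8 by positivity)
  have hposdef : ∀ s u : ℝ, (s, u) ≠ ((0:ℝ), (0:ℝ)) → 0 < s^2 + 2*s*u + 2*u^2 := by
    intro s u hne
    have hne' : ¬(s = 0 ∧ u = 0) := by simpa [Prod.ext_iff] using hne
    by_cases hu : u = 0
    · have hs : s ≠ 0 := fun h => hne' ⟨h, hu⟩
      subst hu
      have : 0 < s^2 := by positivity
      nlinarith
    · have h1 : u^2 ≠ 0 := pow_ne_zero 2 hu
      have h2 : 0 < u^2 := lt_of_le_of_ne (sq_nonneg u) (Ne.symm h1)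
      nlinarith [sq_nonneg (s + u)]
  refine ⟨by norm_num, hposdef, ?_, ε, hεpos, ?_⟩
  · rw [key ((0:ℝ), (0:ℝ))]
    have h0 : duD g 0 = 0 := duD_zero hgc hjet'
    simp [show duD g (0, 0) = 0 from h0]
  · intro p hp hpne
    rw [key p]
    have hb := hε p hp
    have hp0 : p ≠ 0 := by
      rw [show ((0 : ℝ × ℝ)) = ((0 : ℝ), (0 : ℝ)) from rfl]
      exact hpne
    have hN : 0 < ‖p‖ := norm_pos_iff.2 hp0
    have hq : 0 < p.1^2 + 2*p.1*p.2 + 2*p.2^2 := by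
      apply hposdef
      simpa [Prod.ext_iff] using hpne
    have hnsq : ‖p‖^2 ≤ p.1^2 + p.2^2 := by
      rw [Prod.norm_def]
      rcases max_cases ‖p.1‖ ‖p.2‖ with ⟨hmx, _⟩ | ⟨hmx, _⟩ <;>
        rw [hmx, Real.norm_eq_abs, sq_abs] <;> nlinarith [sq_nonneg p.1, sq_nonneg p.2]
    have hq3 : ‖p‖^2 / 3 ≤ p.1^2 + 2*p.1*p.2 + 2*p.2^2 := by
      nlinarith [sq_nonneg (2*p.1 + 3*p.2), sq_nonneg p.2]
    intro hzero
    have hdg : duD g p = -(t21 * (p.1^2 + 2*p.1*p.2 + 2*p.2^2)) := by linarith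
    have habs : |duD g p| = |t21| * (p.1^2 + 2*p.1*p.2 + 2*p.2^2) := by
      rw [hdg, abs_neg, abs_mul, abs_of_pos hq]
    rw [habs] at hb
    have ht21 : 0 < |t21| := abs_pos.2 h21
    nlinarith [mul_le_mul_of_nonneg_left hq3 ht21.le]
end
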